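/- Let q ≥ 1 be an integer, N = 2^q, and let B^{(k)} (1 ≤ k ≤ q) be the Galerkin coarse-grid matrices of the constant-kernel stiffness matrix, defined by B^{(1)} = B and B^{(k)} = W_k B^{(k−1)} W_kᵀ, and let D_{(k)} be the diagonal part of B^{(k)}. Then for every 1 ≤ k ≤ q, every eigenvalue of D_{(k)}⁻¹B^{(k)} is real and strictly less than 3, and the largest eigenvalue of D_{(k)}⁻¹B^{(k)} is at least 1; i.e., 1 ≤ λ_max(D_{(k)}⁻¹B^{(k)}) < 3. -/

import Mathlib

open Matrix

/-- The `(N−1)×(N−1)` constant-kernel stiffness matrix: `2N/3 − 1` on the diagonal,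
`N/6 − 1` on the first sub/super-diagonals, and `−1` elsewhere. -/
noncomputable def constB (N : ℕ) : Matrix (Fin (N - 1)) (Fin (N - 1)) ℝ :=
  Matrix.of fun i j =>
    if (i : ℕ) = (j : ℕ) then 2 * (N : ℝ) / 3 - 1
    else if (i : ℕ) + 1 = (j : ℕ) ∨ (j : ℕ) + 1 = (i : ℕ) then (N : ℝ) / 6 - 1
    else -1

/-- Four times the full-weighting restriction: rows have the stencil `[1, 2, 1]`
(row `i` acts on columns `2i−1, 2i, 2i+1` in 1-based numbering). -/
def Wgen (m n : ℕ) : Matrix (Fin m) (Fin n) ℝ :=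
  Matrix.of fun i j =>
    if (j : ℕ) = 2 * (i : ℕ) then 1
    else if (j : ℕ) = 2 * (i : ℕ) + 1 then 2
    else if (j : ℕ) = 2 * (i : ℕ) + 2 then 1
    else 0

/-- The Galerkin coarse-grid hierarchy of the constant-kernel stiffness matrix, indexed
so that `Bseq q (k-1)` is the level-`k` matrix `B^{(k)}` of size `N/2^{k−1} − 1`,
`N = 2^q`: `Bseq q 0 = constB (2^q)` and `Bseq q (j+1) = W ⬝ Bseq q j ⬝ Wᵀ`. -/
noncomputable def Bseq (q : ℕ) : (j : ℕ) → Matrix (Fin (2 ^ (q - j) - 1)) (Fin (2 ^ (q - j) - 1)) ℝ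
  | 0 => constB (2 ^ q)
  | j + 1 =>
      Wgen (2 ^ (q - (j + 1)) - 1) (2 ^ (q - j) - 1) * Bseq q j *
        (Wgen (2 ^ (q - (j + 1)) - 1) (2 ^ (q - j) - 1))ᵀ

section Aux
open Finset
def fA (p r : ℕ) : ℝ :=
  if p = r then 4 else if p + 1 = r ∨ r + 1 = p then 1 else 0

lemma fA_diag {p r : ℕ} (h : p = r) : fA p r = 4 := by unfold fA; rw [if_pos h]
lemma fA_off {p r : ℕ} (h : p + 1 = r ∨ r + 1 = p) : fA p r = 1 := by
  unfold fA; rw [if_neg (by omega), if_pos h]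
lemma fA_zero {p r : ℕ} (h1 : p ≠ r) (h2 : p + 1 ≠ r) (h3 : r + 1 ≠ p) : fA p r = 0 := by
  unfold fA; rw [if_neg h1, if_neg (by omega)]

lemma fA_symm (p r : ℕ) : fA p r = fA r p := by
  unfold fA; split_ifs <;> first | rfl | omega

/-- the 9-point Galerkin identity for `fA`. -/
lemma fA_gal (a b : ℕ) :
    (fA (2*a) (2*b) + 2 * fA (2*a+1) (2*b) + fA (2*a+2) (2*b))
      + 2 * (fA (2*a) (2*b+1) + 2 * fA (2*a+1) (2*b+1) + fA (2*a+2) (2*b+1))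
      + (fA (2*a) (2*b+2) + 2 * fA (2*a+1) (2*b+2) + fA (2*a+2) (2*b+2))
      = 8 * fA a b := by
  rcases eq_or_ne a b with h | h1
  · subst h
    rw [show fA (2*a) (2*a) = 4 from fA_diag rfl,
      show fA (2*a+1) (2*a) = 1 from fA_off (by omega),
      show fA (2*a+2) (2*a) = 0 from fA_zero (by omega) (by omega) (by omega),
      show fA (2*a) (2*a+1) = 1 from fA_off (by omega),
      show fA (2*a+1) (2*a+1) = 4 from fA_diag rfl,
      show fA (2*a+2) (2*a+1) = 1 from fA_off (by omega),
      show fA (2*a) (2*a+2) = 0 from fA_zero (by omega) (by omega) (by omega),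
      show fA (2*a+1) (2*a+2) = 1 from fA_off (by omega),
      show fA (2*a+2) (2*a+2) = 4 from fA_diag rfl,
      show fA a a = 4 from fA_diag rfl]
    ring
  rcases eq_or_ne (a+1) b with h | h2
  · subst h
    rw [show fA (2*a) (2*(a+1)) = 0 from fA_zero (by omega) (by omega) (by omega),
      show fA (2*a+1) (2*(a+1)) = 1 from fA_off (by omega),
      show fA (2*a+2) (2*(a+1)) = 4 from fA_diag (by omega),
      show fA (2*a) (2*(a+1)+1) = 0 from fA_zero (by omega) (by omega) (by omega),
      show fA (2*a+1) (2*(a+1)+1) = 0 from fA_zero (by omega) (by omega) (by omega),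
      show fA (2*a+2) (2*(a+1)+1) = 1 from fA_off (by omega),
      show fA (2*a) (2*(a+1)+2) = 0 from fA_zero (by omega) (by omega) (by omega),
      show fA (2*a+1) (2*(a+1)+2) = 0 from fA_zero (by omega) (by omega) (by omega),
      show fA (2*a+2) (2*(a+1)+2) = 0 from fA_zero (by omega) (by omega) (by omega),
      show fA a (a+1) = 1 from fA_off (by omega)]
    ring
  rcases eq_or_ne (b+1) a with h | h3
  · subst h
    rw [show fA (2*(b+1)) (2*b) = 0 from fA_zero (by omega) (by omega) (by omega),
      show fA (2*(b+1)+1) (2*b) = 0 from fA_zero (by omega) (by omega) (by omega),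
      show fA (2*(b+1)+2) (2*b) = 0 from fA_zero (by omega) (by omega) (by omega),
      show fA (2*(b+1)) (2*b+1) = 1 from fA_off (by omega),
      show fA (2*(b+1)+1) (2*b+1) = 0 from fA_zero (by omega) (by omega) (by omega),
      show fA (2*(b+1)+2) (2*b+1) = 0 from fA_zero (by omega) (by omega) (by omega),
      show fA (2*(b+1)) (2*b+2) = 4 from fA_diag (by omega),
      show fA (2*(b+1)+1) (2*b+2) = 1 from fA_off (by omega),
      show fA (2*(b+1)+2) (2*b+2) = 0 from fA_zero (by omega) (by omega) (by omega),
      show fA (b+1) b = 1 from fA_off (by omega)]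
    ring
  · rw [show fA (2*a) (2*b) = 0 from fA_zero (by omega) (by omega) (by omega),
      show fA (2*a+1) (2*b) = 0 from fA_zero (by omega) (by omega) (by omega),
      show fA (2*a+2) (2*b) = 0 from fA_zero (by omega) (by omega) (by omega),
      show fA (2*a) (2*b+1) = 0 from fA_zero (by omega) (by omega) (by omega),
      show fA (2*a+1) (2*b+1) = 0 from fA_zero (by omega) (by omega) (by omega),
      show fA (2*a+2) (2*b+1) = 0 from fA_zero (by omega) (by omega) (by omega),
      show fA (2*a) (2*b+2) = 0 from fA_zero (by omega) (by omega) (by omega),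
      show fA (2*a+1) (2*b+2) = 0 from fA_zero (by omega) (by omega) (by omega),
      show fA (2*a+2) (2*b+2) = 0 from fA_zero (by omega) (by omega) (by omega),
      show fA a b = 0 from fA_zero h1 h2 h3]
    ring

noncomputable def matA (n : ℕ) : Matrix (Fin n) (Fin n) ℝ := Matrix.of fun i j => fA i j
noncomputable def matJ (n : ℕ) : Matrix (Fin n) (Fin n) ℝ := Matrix.of fun _ _ => 1

lemma Wrow {m n : ℕ} (h : n = 2*m+1) (i : Fin m) (f : Fin n → ℝ) :
    ∑ p, Wgen m n i p * f p =
      f ⟨2*i, by have := i.isLt; omega⟩ + 2 * f ⟨2*i+1, by have := i.isLt; omega⟩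
        + f ⟨2*i+2, by have := i.isLt; omega⟩ := by
  have key : ∀ p : Fin n, Wgen m n i p * f p =
      (if p = (⟨2*i, by have := i.isLt; omega⟩ : Fin n) then f p else 0) +
      ((if p = (⟨2*i+1, by have := i.isLt; omega⟩ : Fin n) then 2 * f p else 0) +
       (if p = (⟨2*i+2, by have := i.isLt; omega⟩ : Fin n) then f p else 0)) := by
    intro p
    simp only [Wgen, of_apply, Fin.ext_iff]
    split_ifs <;> first | (exfalso; omega) | ring
  rw [Finset.sum_congr rfl (fun p _ => key p), Finset.sum_add_distrib, Finset.sum_add_distrib]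
  simp [Finset.sum_ite_eq']
  ring

lemma WBW {m n : ℕ} (h : n = 2*m+1) (B : Matrix (Fin n) (Fin n) ℝ) (i j : Fin m) :
    (Wgen m n * B * (Wgen m n)ᵀ) i j =
      (B ⟨2*i, by have := i.isLt; omega⟩ ⟨2*j, by have := j.isLt; omega⟩
        + 2 * B ⟨2*i+1, by have := i.isLt; omega⟩ ⟨2*j, by have := j.isLt; omega⟩
        + B ⟨2*i+2, by have := i.isLt; omega⟩ ⟨2*j, by have := j.isLt; omega⟩)
      + 2 * (B ⟨2*i, by have := i.isLt; omega⟩ ⟨2*j+1, by have := j.isLt; omega⟩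
        + 2 * B ⟨2*i+1, by have := i.isLt; omega⟩ ⟨2*j+1, by have := j.isLt; omega⟩
        + B ⟨2*i+2, by have := i.isLt; omega⟩ ⟨2*j+1, by have := j.isLt; omega⟩)
      + (B ⟨2*i, by have := i.isLt; omega⟩ ⟨2*j+2, by have := j.isLt; omega⟩
        + 2 * B ⟨2*i+1, by have := i.isLt; omega⟩ ⟨2*j+2, by have := j.isLt; omega⟩
        + B ⟨2*i+2, by have := i.isLt; omega⟩ ⟨2*j+2, by have := j.isLt; omega⟩) := by
  have hWB : ∀ c : Fin n, (Wgen m n * B) i c =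
      B ⟨2*i, by have := i.isLt; omega⟩ c + 2 * B ⟨2*i+1, by have := i.isLt; omega⟩ c
        + B ⟨2*i+2, by have := i.isLt; omega⟩ c := by
    intro c
    rw [mul_apply]
    exact Wrow h i (fun p => B p c)
  have : (Wgen m n * B * (Wgen m n)ᵀ) i j = ∑ r, Wgen m n j r * (Wgen m n * B) i r := by
    rw [mul_apply]
    exact Finset.sum_congr rfl fun r _ => by rw [transpose_apply, mul_comm]
  rw [this, Wrow h j (fun r => (Wgen m n * B) i r), hWB, hWB, hWB]

lemma galA {m n : ℕ} (h : n = 2*m+1) :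
    Wgen m n * matA n * (Wgen m n)ᵀ = (8:ℝ) • matA m := by
  ext i j
  rw [WBW h]
  simp only [matA, of_apply, Matrix.smul_apply, smul_eq_mul]
  exact fA_gal i j

lemma galJ {m n : ℕ} (h : n = 2*m+1) :
    Wgen m n * matJ n * (Wgen m n)ᵀ = (16:ℝ) • matJ m := by
  ext i j
  rw [WBW h]
  simp [matJ]
  norm_num

lemma constB_eq (N : ℕ) : constB N = ((N:ℝ)/6) • matA (N-1) - matJ (N-1) := by
  ext i j
  simp only [constB, matA, matJ, of_apply, Matrix.sub_apply, Matrix.smul_apply, smul_eq_mul, fA]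
  split_ifs <;> ring

lemma Bseq_eq (q : ℕ) : ∀ j, j ≤ q - 1 → 1 ≤ q →
    Bseq q j = ((2^q : ℝ)/6 * 8^j) • matA (2^(q-j)-1) - (16:ℝ)^j • matJ (2^(q-j)-1) := by
  intro j
  induction j with
  | zero =>
    intro _ _
    show constB (2^q) = _
    rw [constB_eq]
    push_cast
    norm_num
    simp
  | succ j ih =>
    intro hj hq
    have hj' : j ≤ q - 1 := by omega
    have h2 : 2^(q-j)-1 = 2*(2^(q-(j+1))-1)+1 := by
      have e : q - j = (q - (j+1)) + 1 := by omega
      have pos : 1 ≤ 2^(q-(j+1)) := Nat.one_le_two_pow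
      rw [e, pow_succ]
      omega
    show Wgen _ _ * Bseq q j * (Wgen _ _)ᵀ = _
    rw [ih hj' hq, Matrix.mul_sub, Matrix.sub_mul, Matrix.mul_smul, Matrix.smul_mul,
      Matrix.mul_smul, Matrix.smul_mul, galA h2, galJ h2, smul_smul, smul_smul]
    rw [show ((2:ℝ)^q/6*8^j)*8 = (2^q/6*8^(j+1)) from by ring,
      show ((16:ℝ)^j)*16 = 16^(j+1) from by ring]

lemma fA_col (n : ℕ) (hn : 1 ≤ n) (y : ℕ → ℝ) :
    ∑ i ∈ range n, fA i n * y i = y (n-1) := by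
  rw [Finset.sum_eq_single (n-1)]
  · rw [fA_off (by omega)]; ring
  · intro i hi hne
    rw [fA_zero (by simp at hi; omega) (by simp at hi; omega) (by simp at hi; omega)]
    ring
  · intro hmem
    exact absurd (Finset.mem_range.2 (by omega)) hmem

lemma fA_quad (n : ℕ) (hn : 1 ≤ n) (y : ℕ → ℝ) :
    ∑ i ∈ range n, ∑ r ∈ range n, fA i r * (y i * y r)
      ≤ 6 * ∑ i ∈ range n, y i ^ 2 - y 0 ^ 2 - y (n-1) ^ 2 := by
  induction n, hn using Nat.le_induction with
  | base => norm_num [fA]; nlinarith [sq_nonneg (y 0)]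
  | succ n hn ih =>
    have split : ∑ i ∈ range (n+1), ∑ r ∈ range (n+1), fA i r * (y i * y r)
        = (∑ i ∈ range n, ∑ r ∈ range n, fA i r * (y i * y r))
          + 2 * (y (n-1) * y n) + 4 * (y n * y n) := by
      rw [Finset.sum_range_succ]
      have inner : ∀ i, ∑ r ∈ range (n+1), fA i r * (y i * y r)
          = (∑ r ∈ range n, fA i r * (y i * y r)) + fA i n * (y i * y n) := fun i =>
        Finset.sum_range_succ _ n
      rw [Finset.sum_congr rfl (fun i _ => inner i), Finset.sum_add_distrib, inner n]
      have e1 : ∑ i ∈ range n, fA i n * (y i * y n)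
          = (∑ i ∈ range n, fA i n * y i) * y n := by
          rw [Finset.sum_mul]; exact Finset.sum_congr rfl fun i _ => by ring
      have e2 : ∑ r ∈ range n, fA n r * (y n * y r)
          = (∑ r ∈ range n, fA r n * y r) * y n := by
        refine Eq.trans (Finset.sum_congr rfl fun r _ => ?_) (by rw [Finset.sum_mul])
        rw [show fA n r = fA r n from by unfold fA; split_ifs <;> first | rfl | omega]
        ring
      rw [e1, e2, fA_col n hn, fA_diag rfl]
      ring
    rw [split, Finset.sum_range_succ]
    have hlast : (n + 1 : ℕ) - 1 = n := by omega
    rw [hlast]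
    nlinarith [sq_nonneg (y (n-1) - y n), ih]

lemma finQuad (nn : ℕ) (hn : 0 < nn) (x : Fin nn → ℝ) :
    ∑ i : Fin nn, ∑ r : Fin nn, fA i r * (x i * x r)
      ≤ 6 * ∑ i : Fin nn, x i ^ 2 - x ⟨0, hn⟩ ^ 2 - x ⟨nn-1, by omega⟩ ^ 2 := by
  set y : ℕ → ℝ := fun t => if h : t < nn then x ⟨t, h⟩ else 0 with hy
  have hx : ∀ i : Fin nn, x i = y i := fun i => by simp [hy, i.isLt]
  have h1 : ∑ i : Fin nn, ∑ r : Fin nn, fA i r * (x i * x r)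
      = ∑ i ∈ range nn, ∑ r ∈ range nn, fA i r * (y i * y r) := by
    simp only [hx]
    rw [Fin.sum_univ_eq_sum_range (fun t => ∑ r : Fin nn, fA t r * (y t * y r)) nn]
    exact Finset.sum_congr rfl fun i _ =>
      Fin.sum_univ_eq_sum_range (fun t => fA i t * (y i * y t)) nn
  have h2 : ∑ i : Fin nn, x i ^ 2 = ∑ i ∈ range nn, y i ^ 2 := by
    simp only [hx]
    exact Fin.sum_univ_eq_sum_range (fun t => y t ^ 2) nn
  have hy0 : y 0 = x ⟨0, hn⟩ := by simp [hy, hn]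
  have hyl : y (nn-1) = x ⟨nn-1, by omega⟩ := by
    have : nn - 1 < nn := by omega
    simp [hy, this]
  rw [h1, h2, ← hy0, ← hyl]
  exact fA_quad nn hn y

end Aux

/-- **Spectral bounds for the Jacobi-preconditioned coarse-grid matrices.**
For `N = 2^q` and `1 ≤ k ≤ q`, with `D_{(k)}` the diagonal part of `B^{(k)} = Bseq q (k−1)`:
every eigenvalue of `D_{(k)}⁻¹B^{(k)}` is real and `< 3`, and some (real) eigenvalue is
`≥ 1`; i.e. `1 ≤ λ_max(D_{(k)}⁻¹B^{(k)}) < 3`. -/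
theorem stmt16 (q : ℕ) (hq : 1 ≤ q) (k : ℕ) (hk1 : 1 ≤ k) (hk2 : k ≤ q) :
    (∀ μ ∈ spectrum ℂ
        (((Matrix.diagonal fun i => Bseq q (k - 1) i i)⁻¹ * Bseq q (k - 1)).map
          (fun x : ℝ => (x : ℂ))),
        μ.im = 0 ∧ μ.re < 3) ∧
    ∃ μ ∈ spectrum ℝ
        ((Matrix.diagonal fun i => Bseq q (k - 1) i i)⁻¹ * Bseq q (k - 1)),
      1 ≤ μ := by
  classical
  set j := k - 1 with hjdef
  have hjq : j ≤ q - 1 := by omega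
  set nn := 2 ^ (q - j) - 1 with hnndef
  have hqj1 : 1 ≤ q - j := by omega
  have hnpos : 0 < nn := by
    have h2 : 2 ≤ 2 ^ (q - j) := by
      calc 2 = 2^1 := rfl
      _ ≤ 2 ^ (q - j) := Nat.pow_le_pow_right (by norm_num) hqj1
    omega
  set c : ℝ := (2^q : ℝ)/6 * 8^j with hcdef
  set d : ℝ := (16:ℝ)^j with hddef
  have hBeq : Bseq q j = c • matA nn - d • matJ nn := Bseq_eq q j hjq hq
  have hcpos : 0 < c := by positivity
  have hdpos : 0 < d := by positivity
  have h8 : (0:ℝ) < 8^j := by positivity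
  have h2j : (2:ℝ)^j ≤ 2^(q-1) := by
    apply pow_le_pow_right₀ (by norm_num) hjq
  have h2q1 : (0:ℝ) < 2^(q-1) := by positivity
  have h2q : (2:ℝ)^q = 2 * 2^(q-1) := by
    rw [← pow_succ']
    congr 1
    omega
  have h16 : d = 2^j * 8^j := by rw [hddef, ← mul_pow]; norm_num
  set a : ℝ := 4*c - d with hadef
  have hapos : 0 < a := by
    rw [hadef, hcdef, h16, h2q]
    nlinarith [h2j, h8, h2q1]
  have hane : a ≠ 0 := ne_of_gt hapos
  -- diagonal entries
  have hdiagval : ∀ i : Fin nn, Bseq q j i i = a := by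
    intro i
    rw [hBeq]
    have h4 : fA i i = 4 := fA_diag rfl
    simp [matA, matJ, Matrix.sub_apply, Matrix.smul_apply, h4, hadef]
    ring
  have hDinv : (Matrix.diagonal (fun i => Bseq q j i i))⁻¹
      = a⁻¹ • (1 : Matrix (Fin nn) (Fin nn) ℝ) := by
    have hD : Matrix.diagonal (fun i => Bseq q j i i)
        = a • (1 : Matrix (Fin nn) (Fin nn) ℝ) := by
      rw [smul_one_eq_diagonal]
      exact congrArg Matrix.diagonal (funext hdiagval)
    rw [hD]
    apply inv_eq_right_inv
    rw [Matrix.smul_mul, Matrix.mul_smul, one_mul, smul_smul, mul_inv_cancel₀ hane, one_smul]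
  have hMul : (Matrix.diagonal (fun i => Bseq q j i i))⁻¹ * Bseq q j = a⁻¹ • Bseq q j := by
    rw [hDinv, Matrix.smul_mul, one_mul]
  rw [hMul]
  -- symmetry
  have hBsym : ∀ i r : Fin nn, Bseq q j i r = Bseq q j r i := by
    intro i r
    rw [hBeq]
    simp only [Matrix.sub_apply, Matrix.smul_apply, smul_eq_mul, matA, matJ, of_apply]
    rw [fA_symm]
  -- the quadratic form bound
  have hQbound : ∃ t : ℝ, t < 3*a ∧ ∀ x : Fin nn → ℝ,
      ∑ i, ∑ r, Bseq q j i r * (x i * x r) ≤ t * ∑ i, x i ^ 2 := by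
    have hQeq : ∀ x : Fin nn → ℝ, ∑ i, ∑ r, Bseq q j i r * (x i * x r)
        = c * (∑ i : Fin nn, ∑ r : Fin nn, fA i.1 r.1 * (x i * x r)) - d * (∑ i, x i)^2 := by
      intro x
      have hJ : (∑ i, x i) * (∑ r, x r) = ∑ i : Fin nn, ∑ r : Fin nn, x i * x r :=
        Finset.sum_mul_sum _ _ _ _
      rw [sq, hJ, Finset.mul_sum, Finset.mul_sum, ← Finset.sum_sub_distrib]
      refine Finset.sum_congr rfl fun i _ => ?_
      rw [Finset.mul_sum, Finset.mul_sum, ← Finset.sum_sub_distrib]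
      refine Finset.sum_congr rfl fun r _ => ?_
      rw [hBeq]
      simp [matA, matJ, Matrix.sub_apply, Matrix.smul_apply]
      ring
    by_cases hkq : k = q
    · -- nn = 1
      have hnn1 : nn = 1 := by
        have : q - j = 1 := by omega
        rw [hnndef, this]
        norm_num
      refine ⟨a, by nlinarith, fun x => ?_⟩
      have huniq : ∀ i : Fin nn, i = (⟨0, hnpos⟩ : Fin nn) := by
        intro i
        have := i.isLt
        exact Fin.ext (by omega)
      have hsum1 : ∀ f : Fin nn → ℝ, (∑ i, f i) = f ⟨0, hnpos⟩ := by
        intro f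
        exact Finset.sum_eq_single _ (fun b _ hb => absurd (huniq b) hb)
          (fun h => absurd (Finset.mem_univ _) h)
      rw [hQeq x, hsum1 (fun i : Fin nn => ∑ r : Fin nn, fA i.1 r.1 * (x i * x r)),
        hsum1 (fun r : Fin nn => fA (0:ℕ) r.1 * (x ⟨0, hnpos⟩ * x r)),
        hsum1 x, hsum1 (fun i => x i ^ 2)]
      rw [show fA 0 0 = 4 from fA_diag rfl, hadef]
      nlinarith [sq_nonneg (x ⟨0, hnpos⟩)]
    · -- k < q : t = 6c
      have hjq2 : j ≤ q - 2 := by omega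
      have h2j2 : (2:ℝ)^j ≤ 2^(q-2) := pow_le_pow_right₀ (by norm_num) hjq2
      have h2q2 : (2:ℝ)^q = 4 * 2^(q-2) := by
        rw [show (4:ℝ) = 2^2 from by norm_num, ← pow_add]
        congr 1
        omega
      have h2q2pos : (0:ℝ) < 2^(q-2) := by positivity
      refine ⟨6*c, by rw [hadef]; nlinarith [h2j2, h8, h2q2pos, h2q2], fun x => ?_⟩
      rw [hQeq x]
      have hA := finQuad nn hnpos x
      nlinarith [mul_le_mul_of_nonneg_left hA hcpos.le, sq_nonneg (∑ i, x i),
        sq_nonneg (x ⟨0, hnpos⟩), sq_nonneg (x ⟨nn-1, by omega⟩), hdpos, hcpos]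
  obtain ⟨t, htlt, hQ⟩ := hQbound
  constructor
  · -- complex spectrum part
    intro μ hμ
    rw [spectrum.mem_iff] at hμ
    have hdet : (algebraMap ℂ (Matrix (Fin nn) (Fin nn) ℂ) μ
        - ((a⁻¹ • Bseq q j).map (fun x : ℝ => (x:ℂ)))).det = 0 := by
      by_contra hne
      exact hμ ((Matrix.isUnit_iff_isUnit_det _).2 (isUnit_iff_ne_zero.2 hne))
    obtain ⟨v, hv0, hveq⟩ := (Matrix.exists_mulVec_eq_zero_iff).2 hdet
    have heig : ((a⁻¹ • Bseq q j).map (fun x : ℝ => (x:ℂ))) *ᵥ v = μ • v := by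
      rw [Matrix.sub_mulVec, Algebra.algebraMap_eq_smul_one, Matrix.smul_mulVec,
        Matrix.one_mulVec] at hveq
      exact (sub_eq_zero.mp hveq).symm
    set u : Fin nn → ℝ := fun i => (v i).re with hu
    set w : Fin nn → ℝ := fun i => (v i).im with hw
    set S : ℝ := ∑ i, Complex.normSq (v i) with hS
    have hSpos : 0 < S := by
      have hex : ∃ i, v i ≠ 0 := by
        by_contra hc
        push_neg at hc
        exact hv0 (funext hc)
      obtain ⟨i0, hi0⟩ := hex
      exact Finset.sum_pos' (fun i _ => Complex.normSq_nonneg _)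
        ⟨i0, Finset.mem_univ _, Complex.normSq_pos.2 hi0⟩
    set Hc : ℂ := ∑ i, ∑ r, ((Bseq q j i r : ℝ) : ℂ) * ((starRingEnd ℂ) (v i) * v r) with hHc
    have hkey : μ * (S:ℂ) = ((a⁻¹ : ℝ):ℂ) * Hc := by
      have lhs1 : ∑ i, (starRingEnd ℂ) (v i) * (((a⁻¹ • Bseq q j).map
          (fun x : ℝ => (x:ℂ))) *ᵥ v) i = μ * (S:ℂ) := by
        rw [heig]
        have : ∀ i, (starRingEnd ℂ) (v i) * (μ • v) i
            = μ * ((starRingEnd ℂ) (v i) * v i) := by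
          intro i
          simp [Pi.smul_apply, smul_eq_mul]
          ring
        rw [Finset.sum_congr rfl (fun i _ => this i), ← Finset.mul_sum]
        congr 1
        rw [hS]
        push_cast
        refine Finset.sum_congr rfl fun i _ => ?_
        rw [← Complex.normSq_eq_conj_mul_self]
      have lhs2 : ∑ i, (starRingEnd ℂ) (v i) * (((a⁻¹ • Bseq q j).map
          (fun x : ℝ => (x:ℂ))) *ᵥ v) i = ((a⁻¹ : ℝ):ℂ) * Hc := by
        rw [hHc, Finset.mul_sum]
        refine Finset.sum_congr rfl fun i _ => ?_
        simp only [Matrix.mulVec, dotProduct, Matrix.map_apply, Matrix.smul_apply,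
          smul_eq_mul]
        rw [Finset.mul_sum, Finset.mul_sum]
        refine Finset.sum_congr rfl fun r _ => ?_
        push_cast
        ring
      rw [← lhs1, lhs2]
    have hHcim : Hc.im = 0 := by
      have hconj : (starRingEnd ℂ) Hc = Hc := by
        rw [hHc, map_sum]
        calc ∑ i, (starRingEnd ℂ) (∑ r, ((Bseq q j i r : ℝ) : ℂ)
              * ((starRingEnd ℂ) (v i) * v r))
            = ∑ i, ∑ r, ((Bseq q j r i : ℝ) : ℂ) * ((starRingEnd ℂ) (v r) * v i) := by
              refine Finset.sum_congr rfl fun i _ => ?_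
              rw [map_sum]
              refine Finset.sum_congr rfl fun r _ => ?_
              rw [hBsym i r, _root_.map_mul, _root_.map_mul, Complex.conj_ofReal,
                Complex.conj_conj]
              ring
          _ = _ := Finset.sum_comm
      exact Complex.conj_eq_iff_im.mp hconj
    have him : μ.im = 0 := by
      have h1 := congrArg Complex.im hkey
      simp [Complex.mul_im, Complex.ofReal_im, Complex.ofReal_re, hHcim] at h1
      rcases h1 with h | h
      · exact h
      · exact absurd h (ne_of_gt hSpos)
    refine ⟨him, ?_⟩
    -- real part
    have hre : μ.re * S = a⁻¹ * Hc.re := by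
      have h1 := congrArg Complex.re hkey
      simpa [Complex.mul_re, Complex.ofReal_im, Complex.ofReal_re, him] using h1
    have hHcre : Hc.re = (∑ i, ∑ r, Bseq q j i r * (u i * u r))
        + (∑ i, ∑ r, Bseq q j i r * (w i * w r)) := by
      rw [hHc, Complex.re_sum, ← Finset.sum_add_distrib]
      refine Finset.sum_congr rfl fun i _ => ?_
      rw [Complex.re_sum, ← Finset.sum_add_distrib]
      refine Finset.sum_congr rfl fun r _ => ?_
      simp [Complex.mul_re, Complex.ofReal_re, Complex.ofReal_im, hu, hw]
      ring
    have hSsplit : S = (∑ i, u i ^ 2) + (∑ i, w i ^ 2) := by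
      rw [hS, ← Finset.sum_add_distrib]
      refine Finset.sum_congr rfl fun i _ => ?_
      rw [Complex.normSq_apply]
      simp [hu, hw]
      ring
    have hQu := hQ u
    have hQw := hQ w
    have hQsum : (∑ i, ∑ r, Bseq q j i r * (u i * u r))
        + (∑ i, ∑ r, Bseq q j i r * (w i * w r)) ≤ t * S := by
      rw [hSsplit]
      have h1 := add_le_add hQu hQw
      linarith
    have hfinal : μ.re * S ≤ (a⁻¹ * t) * S := by
      rw [hre, hHcre, mul_assoc]
      exact mul_le_mul_of_nonneg_left hQsum (inv_nonneg.mpr hapos.le)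
    have hle : μ.re ≤ a⁻¹ * t := le_of_mul_le_mul_right hfinal hSpos
    have h3 : a⁻¹ * t < 3 := by
      rw [inv_mul_lt_iff₀ hapos]
      linarith
    linarith
  · -- real spectrum part
    have hHerm : (a⁻¹ • Bseq q j).IsHermitian := by
      show ((a⁻¹ • Bseq q j))ᴴ = _
      ext i r
      simp only [conjTranspose_apply, Matrix.smul_apply, smul_eq_mul, star_trivial]
      rw [hBsym r i]
    have hMdiag : ∀ i : Fin nn, (a⁻¹ • Bseq q j) i i = 1 := by
      intro i
      simp only [Matrix.smul_apply, smul_eq_mul]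
      rw [hdiagval i]
      field_simp
    have htr : (a⁻¹ • Bseq q j).trace = (nn : ℝ) := by
      rw [Matrix.trace]
      simp only [Matrix.diag]
      rw [Finset.sum_congr rfl (fun i _ => hMdiag i)]
      simp
    have hsum : ∑ i, hHerm.eigenvalues i = (nn:ℝ) := by
      have hspec := hHerm.spectral_theorem
      have h1 : (a⁻¹ • Bseq q j).trace
          = (Matrix.diagonal (RCLike.ofReal ∘ hHerm.eigenvalues)).trace := by
        conv_lhs => rw [hspec]
        rw [Unitary.conjStarAlgAut_apply]
        rw [Matrix.trace_mul_cycle]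
        rw [Matrix.mem_unitaryGroup_iff'.mp (hHerm.eigenvectorUnitary).2, one_mul]
      rw [htr, Matrix.trace_diagonal] at h1
      simpa using h1.symm
    have hex : ∃ i : Fin nn, 1 ≤ hHerm.eigenvalues i := by
      by_contra hcon
      push_neg at hcon
      have hlt : ∑ i, hHerm.eigenvalues i < ∑ _i : Fin nn, (1:ℝ) :=
        Finset.sum_lt_sum_of_nonempty ⟨⟨0, hnpos⟩, Finset.mem_univ _⟩ (fun i _ => hcon i)
      rw [hsum] at hlt
      simp at hlt
    obtain ⟨i, hi⟩ := hex
    exact ⟨hHerm.eigenvalues i, hHerm.eigenvalues_mem_spectrum_real i, hi⟩
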